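/- arXiv:2007.15556 — 4 statements merged into one kernel-verified Lean document; each statement's English description precedes it below -/
import Mathlib

section
/- If a finite simple 4-critical graph G admits a (7,2)-colouring (a graph homomorphism to the circular clique G_{7,2}), then the complement of G contains a Hamiltonian cycle. -/
/-!
A (7,2)-colouring `f` of a graph `G` must use all seven colours: `G_{7,2}` minus a vertex is
3-colourable, so otherwise `G` would be 3-colourable. In `G_{7,2}` no colour is adjacent to itself
or to its successor, so in the complement of `G` every colour class is a clique and consecutive
classes are completely joined. Running through the classes of colours `0, 1, …, 6` in turn and
returning to the start gives a Hamiltonian cycle of the complement.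
-/

open SimpleGraph

/-- The circular clique `G_{p,q}` on vertex set `ZMod p`. -/
def circClique (p q : ℕ) : SimpleGraph (ZMod p) where
  Adj i j := i ≠ j ∧ (q ≤ (i - j).val ∧ (i - j).val ≤ p - q)
    ∧ (q ≤ (j - i).val ∧ (j - i).val ≤ p - q)
  symm := ⟨fun _ _ ⟨h, h1, h2⟩ => ⟨h.symm, h2, h1⟩⟩
  loopless := ⟨fun _ h => h.1 rfl⟩

/-- `G` admits a `(p,q)`-circular colouring. -/
def HasCircColoring {V : Type*} (G : SimpleGraph V) (p q : ℕ) : Prop :=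
  Nonempty (G →g circClique p q)

/-- A graph is 4-critical. -/
def FourCritical {V : Type*} (G : SimpleGraph V) : Prop :=
  ¬ G.Colorable 3 ∧ ∀ e ∈ G.edgeSet, (G.deleteEdges {e}).Colorable 3

/-- The wheel on `n` vertices: a cycle on `n-1` vertices plus a hub. -/
def wheel (n : ℕ) : SimpleGraph (Option (Fin (n - 1))) where
  Adj u v := match u, v with
    | none, none => False
    | none, some _ => True
    | some _, none => True
    | some i, some j => (cycleGraph (n - 1)).Adj i j
  symm := by constructor; rintro (_|i) (_|j) h <;> simp_all <;> exact h.symm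
  loopless := by constructor; rintro (_|i) h <;> simp_all

namespace SimpleGraph

variable {V : Type*} {G : SimpleGraph V}

theorem exists_isHamiltonianCycle_of_isChain [Fintype V] [DecidableEq V]
    (hV : 2 < Fintype.card V) {u : V} {t : List V} (hnodup : (u :: t).Nodup)
    (hmem : ∀ v, v ∈ u :: t) (hchain : (u :: t ++ [u]).IsChain G.Adj) :
    ∃ (v : V) (c : G.Walk v v), c.IsHamiltonianCycle := by
  have hne : t ++ [u] ≠ [] := by simp
  rw [List.cons_append, List.isChain_cons] at hchain
  let p : G.Walk ((t ++ [u]).head hne) u :=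
    (Walk.ofSupport (t ++ [u]) hne hchain.2).copy rfl (by simp)
  let c := Walk.cons (hchain.1 _ (List.head?_eq_some_head hne)) p
  have hsupp : c.tail.support = t ++ [u] := by simp [c, p]
  have hpath : c.tail.IsPath := by
    rw [Walk.isPath_def, hsupp, List.nodup_append_comm]
    exact hnodup
  have hham : c.tail.IsHamiltonian := hpath.isHamiltonian_of_mem fun v => by
    simpa [hsupp, or_comm] using hmem v
  refine ⟨u, c, Walk.isHamiltonianCycle_isCycle_and_isHamiltonian_tail.mpr ⟨?_, hham⟩⟩
  refine Walk.isCycle_iff_isPath_tail_and_le_length.mpr ⟨hpath, ?_⟩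
  have hcard := hham.length_support
  have hlen : c.length = t.length + 1 := by simp [c, p]
  rw [hsupp, List.length_append, List.length_singleton] at hcard
  omega

theorem exists_isHamiltonianCycle_of_surjective_zmod [Fintype V] [DecidableEq V] {n : ℕ}
    [NeZero n] (hV : 2 < Fintype.card V) (f : V → ZMod n) (hf : Function.Surjective f)
    (hsame : ∀ u v, u ≠ v → f u = f v → G.Adj u v) (hsucc : ∀ u v, f v = f u + 1 → G.Adj u v) :
    ∃ (v : V) (c : G.Walk v v), c.IsHamiltonianCycle := by
  let block (i : ℕ) : List V := (Finset.univ.filter (fun v => f v = i)).toList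
  have mem_block {v : V} {i : ℕ} : v ∈ block i ↔ f v = i := by simp [block]
  have block_ne_nil (i : ℕ) : block i ≠ [] := by
    obtain ⟨v, hv⟩ := hf i
    exact List.ne_nil_of_mem (mem_block.mpr hv)
  have block_isChain (i : ℕ) : (block i).IsChain G.Adj :=
    ((Finset.nodup_toList _).imp_of_mem fun ha hb hab =>
      hsame _ _ hab ((mem_block.mp ha).trans (mem_block.mp hb).symm)).isChain
  let l := ((List.range n).map block).flatten
  have hnodup : l.Nodup := by
    refine List.nodup_flatten.mpr ⟨by simp [block, Finset.nodup_toList], ?_⟩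
    refine List.pairwise_map.mpr (List.nodup_range.imp_of_mem fun hi hj hij => ?_)
    refine List.disjoint_left.mpr fun {x} hx hx' => hij ?_
    have := (mem_block.mp hx).symm.trans (mem_block.mp hx')
    rw [ZMod.natCast_eq_natCast_iff', Nat.mod_eq_of_lt (List.mem_range.mp hi),
      Nat.mod_eq_of_lt (List.mem_range.mp hj)] at this
    exact this
  have hmem (v : V) : v ∈ l := List.mem_flatten.mpr
    ⟨block (f v).val, List.mem_map_of_mem (List.mem_range.mpr (ZMod.val_lt _)),
      mem_block.mpr (ZMod.natCast_zmod_val _).symm⟩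
  have hchain : (l ++ block n).IsChain G.Adj := by
    rw [show l ++ block n = ((List.range (n + 1)).map block).flatten by simp [l, List.range_succ],
      List.isChain_flatten (by simp [block_ne_nil]), List.isChain_map, List.isChain_range_succ]
    refine ⟨by simpa using fun i _ => block_isChain i, fun i _ x hx y hy => hsucc _ _ ?_⟩
    rw [mem_block.mp (List.mem_of_mem_head? hy), mem_block.mp (List.mem_of_mem_getLast? hx)]
    push_cast; rfl
  obtain ⟨u, s, hus⟩ := List.exists_cons_of_ne_nil (block_ne_nil 0)
  obtain ⟨t, hlt⟩ : ∃ t, l = u :: t := by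
    refine ⟨s ++ ((List.range (n - 1)).map (block ∘ Nat.succ)).flatten, ?_⟩
    rw [show l = ((List.range (n - 1 + 1)).map block).flatten by rw [Nat.sub_add_cancel NeZero.one_le]]
    simp [List.range_succ_eq_map, hus]
  rw [hlt] at hnodup hmem hchain
  refine exists_isHamiltonianCycle_of_isChain hV hnodup hmem ?_
  rw [show block n = block 0 by simp [block], hus] at hchain
  obtain ⟨h₁, -, h₃⟩ := List.isChain_append.mp hchain
  exact List.isChain_append.mpr ⟨h₁, List.isChain_singleton u, by simpa using h₃⟩

end SimpleGraph

instance (p q : ℕ) : DecidableRel (circClique p q).Adj := fun _ _ =>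
  inferInstanceAs (Decidable (_ ∧ _ ∧ _))

theorem circClique_not_adj_add_one {p q : ℕ} (hq : 2 ≤ q) (c : ZMod p) :
    ¬(circClique p q).Adj c (c + 1) := by
  rintro ⟨-, -, h, -⟩
  rw [add_sub_cancel_left, ZMod.val_one_eq_one_mod] at h
  have := Nat.mod_le 1 p
  omega

theorem colorable_three_of_hom_circClique_seven_two {V : Type*} {G : SimpleGraph V}
    (f : G →g circClique 7 2) {c : ZMod 7} (hc : ∀ v, f v ≠ c) : G.Colorable 3 := by
  -- colour classes `{c+1, c+2}, {c+3, c+4}, {c+5, c+6}`: consecutive residues are not adjacent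
  have valid : ∀ c a b : ZMod 7, a ≠ c → b ≠ c → (circClique 7 2).Adj a b →
      (a - c - 1).val / 2 ≠ (b - c - 1).val / 2 := by decide
  have bound : ∀ c a : ZMod 7, a ≠ c → (a - c - 1).val / 2 < 3 := by decide
  exact (colorable_iff_exists_bdd_nat_coloring 3).mpr
    ⟨Coloring.mk (fun v => (f v - c - 1).val / 2) fun h => valid c _ _ (hc _) (hc _) (f.map_adj h),
      fun v => bound c _ (hc v)⟩

/-- If a 4-critical graph admits a (7,2)-colouring, then its complement contains a
Hamiltonian cycle. -/
theorem stmt_2 {V : Type*} [Fintype V] [DecidableEq V] (G : SimpleGraph V)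
    (hcrit : FourCritical G) (hcol : HasCircColoring G 7 2) :
    ∃ (v : V) (p : Gᶜ.Walk v v), p.IsHamiltonianCycle := by
  obtain ⟨f⟩ := hcol
  have hf : Function.Surjective f := fun c => by
    by_contra! hc
    exact hcrit.1 (colorable_three_of_hom_circClique_seven_two f hc)
  have hV : 2 < Fintype.card V := by
    have := Fintype.card_le_of_surjective f hf
    rw [ZMod.card] at this
    omega
  have compl_adj_of_not_adj {u v : V} (huv : u ≠ v) (h : ¬(circClique 7 2).Adj (f u) (f v)) :
      Gᶜ.Adj u v :=
    (compl_adj G u v).mpr ⟨huv, fun hadj => h (f.map_adj hadj)⟩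
  refine exists_isHamiltonianCycle_of_surjective_zmod hV f hf
    (fun u v huv hfuv => compl_adj_of_not_adj huv (hfuv ▸ (circClique 7 2).irrefl))
    (fun u v hfuv => compl_adj_of_not_adj ?_ (hfuv ▸ circClique_not_adj_add_one le_rfl _))
  rintro rfl
  exact absurd (left_eq_add.mp hfuv) (by decide : (1 : ZMod 7) ≠ 0)
end

section
/- Let k ≥ 2 and let α be a type of colours. Let L assign to each vertex of the complete graph on k + 1 vertices a finite set L(v) ⊆ α with |L(v)| = k. If L is not constant (some two vertices receive different lists), then there is a function f on the vertices with f(v) ∈ L(v) for every vertex v and f(u) ≠ f(v) for all distinct vertices u, v. -/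
open SimpleGraph

/-!
Hall's theorem. A set of at most `k` vertices sees a whole list of size `k`; the set of all
`k + 1` vertices sees two different lists of size `k`, whose union already has more than `k`
colours.
-/

namespace Finset

variable {α ι : Type*} [DecidableEq α]

theorem card_lt_card_union_of_card_eq_of_ne {A B : Finset α} (hcard : #A = #B) (hne : A ≠ B) :
    #A < #(A ∪ B) := by
  refine card_lt_card (ssubset_iff_subset_ne.mpr ⟨subset_union_left, fun h => hne ?_⟩)
  exact (eq_of_subset_of_card_le (union_eq_left.mp h.symm) hcard.le).symm

theorem card_le_card_biUnion_of_card_eq_of_ne [Fintype ι] {k : ℕ} (hι : Fintype.card ι = k + 1)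
    {L : ι → Finset α} (hcard : ∀ i, #(L i) = k) (hne : ∃ u v, L u ≠ L v) (s : Finset ι) :
    #s ≤ #(s.biUnion L) := by
  rcases s.eq_empty_or_nonempty with rfl | ⟨v, hv⟩
  · simp
  by_cases hs : s = univ
  · subst hs
    obtain ⟨u, w, huw⟩ := hne
    calc #(univ : Finset ι) = k + 1 := by rw [card_univ, hι]
      _ ≤ #(L u ∪ L w) := hcard u ▸ card_lt_card_union_of_card_eq_of_ne (by rw [hcard, hcard]) huw
      _ ≤ #(univ.biUnion L) :=
        card_le_card (union_subset (subset_biUnion_of_mem L (mem_univ u))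
          (subset_biUnion_of_mem L (mem_univ w)))
  · calc #s ≤ k := Nat.le_of_lt_succ (hι ▸ (card_lt_iff_ne_univ s).mpr hs :)
      _ = #(L v) := (hcard v).symm
      _ ≤ #(s.biUnion L) := card_le_card (subset_biUnion_of_mem L hv)

theorem exists_injective_mem_of_card_eq_of_ne [Fintype ι] {k : ℕ} (hι : Fintype.card ι = k + 1)
    {L : ι → Finset α} (hcard : ∀ i, #(L i) = k) (hne : ∃ u v, L u ≠ L v) :
    ∃ f : ι → α, (∀ i, f i ∈ L i) ∧ Function.Injective f := by
  obtain ⟨f, hinj, hmem⟩ := (all_card_le_biUnion_card_iff_exists_injective L).mp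
    (card_le_card_biUnion_of_card_eq_of_ne hι hcard hne)
  exact ⟨f, hmem, hinj⟩

end Finset

theorem stmt_8_general {α : Type*} (k : ℕ) (L : Fin (k + 1) → Finset α)
    (hcard : ∀ v, (L v).card = k) (hnonuniform : ∃ u v, L u ≠ L v) :
    ∃ f : Fin (k + 1) → α, (∀ v, f v ∈ L v) ∧ Function.Injective f := by
  classical
  exact Finset.exists_injective_mem_of_card_eq_of_ne (Fintype.card_fin _) hcard hnonuniform

/-- A non-uniform `k`-list-assignment on the complete graph on `k+1` vertices admits a
proper list colouring (an injective choice function). -/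
theorem stmt_8 {α : Type*} (k : ℕ) (hk : 2 ≤ k) (L : Fin (k + 1) → Finset α)
    (hcard : ∀ v, (L v).card = k) (hnonuniform : ∃ u v, L u ≠ L v) :
    ∃ f : Fin (k + 1) → α, (∀ v, f v ∈ L v) ∧ Function.Injective f :=
  stmt_8_general k L hcard hnonuniform
end

section
/- Let k ≥ 1 and let L be a list assignment on the cycle C_{2k+1} with 2k+1 vertices such that every list L(v) is a 4-interval of ZMod 7 (a set of the form {a, a+1, a+2, a+3} for some a ∈ ZMod 7). Then C_{2k+1} admits an L-(7,2)-colouring if and only if L is not uniform (not all lists are equal). -/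
open SimpleGraph

/-!
Write the list of `v` as `{a v, …, a v + 3}`. If all lists are equal, adjacent colours lie in
opposite halves `{a, a + 1}` and `{a + 2, a + 3}` of the common list, which is impossible around
an odd cycle.

Conversely, let `d v = a (v + 1) - a v`. If some `d v ∈ {2, …, 5}`, give `v + 1` the colour
`a v + 5`, which is adjacent to every colour in the list of `v`, and colour the rest of the cycle
greedily from `v + 2` to `v`. Otherwise every `d v ∈ {0, ±1}`; as `d ≠ 0` and the cycle is odd, the
signs cannot alternate all the way round, so some `d v = ±1` is not followed by `d (v + 1) = -d v`.
Up to the reflection `x ↦ -x` we may take `d v = 1`. Then the colours `a w + p w`, with `p`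
alternating between `0` and `3` except for `p (v + 1) = 1`, form a colouring: the step up of the
lists at `v` makes the two low colours `a v` and `a (v + 1) + 1` adjacent, which repairs the parity.
-/

open SimpleGraph Function Set

instance inst_s10 (p q : ℕ) : DecidableRel (circClique p q).Adj :=
  fun _ _ => inferInstanceAs (Decidable (_ ∧ _ ∧ _))

namespace OddCycleListColouring

section Cycle

variable {m : ℕ} {α : Type*} {σ : α → α} {S : Set α} {g : Fin (m + 1) → α}

open Fin.NatCast in
theorem apply_add_natCast_eq_iterate (hS : MapsTo σ S S)
    (hg : ∀ v, g v ∈ S → g (v + 1) = σ (g v)) {v : Fin (m + 1)} (hv : g v ∈ S) (t : ℕ) :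
    g (v + t) = σ^[t] (g v) := by
  induction t with
  | zero => simp
  | succ t ih =>
    rw [Nat.cast_succ, ← add_assoc, hg _ (ih ▸ hS.iterate t hv), ih, iterate_succ_apply']

open Fin.NatCast in
theorem apply_eq_apply_of_forall_apply_add_one (hg : ∀ v, g (v + 1) = g v) (v w : Fin (m + 1)) :
    g w = g v := by
  have := apply_add_natCast_eq_iterate (σ := id) (S := univ) (mapsTo_univ _ _)
    (fun v _ => hg v) (mem_univ (g v)) (w - v).val
  rwa [Fin.cast_val_eq_self, add_sub_cancel, iterate_id, id] at this

open Fin.NatCast in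
theorem isFixedPt_of_even (hσ : Involutive σ) (hm : Even m) (hS : MapsTo σ S S)
    (hg : ∀ v, g v ∈ S → g (v + 1) = σ (g v)) {v : Fin (m + 1)} (hv : g v ∈ S) :
    IsFixedPt σ (g v) := by
  have := apply_add_natCast_eq_iterate hS hg hv (m + 1)
  rwa [Fin.natCast_self, add_zero, hσ.iterate_odd hm.add_one, eq_comm] at this

theorem exists_ne_zero_and_ne_neg {n : ℕ} (hn : Odd n) (hm : Even m) {d : Fin (m + 1) → ZMod n}
    (hd : ∃ v, d v ≠ 0) : ∃ v, d v ≠ 0 ∧ d (v + 1) ≠ -d v := by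
  by_contra! h
  obtain ⟨v, hv⟩ := hd
  have := isFixedPt_of_even neg_involutive hm (S := {x | x ≠ 0})
    (fun _ hx => neg_ne_zero.mpr hx) h hv
  rcases (ZMod.neg_eq_self_iff _).mp this with h | h
  · exact hv h
  · exact n.not_even_iff_odd.mpr hn ⟨(d v).val, by omega⟩

theorem forall_adj_iff_forall_adj_add_one {H : SimpleGraph α} (hm : 1 ≤ m)
    (f : Fin (m + 1) → α) :
    (∀ u v, (cycleGraph (m + 1)).Adj u v → H.Adj (f u) (f v)) ↔
      ∀ v, H.Adj (f (v + 1)) (f v) := by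
  obtain ⟨m, rfl⟩ : ∃ m', m = m' + 1 := ⟨m - 1, by omega⟩
  refine ⟨fun h v => h _ _ (Or.inl (add_sub_cancel_left v 1)), fun h u v huv => ?_⟩
  rcases huv with huv | huv
  · rw [← sub_add_cancel u v, huv, add_comm]
    exact h v
  · rw [← sub_add_cancel v u, huv, add_comm]
    exact (h u).symm

end Cycle

theorem mem_interval_iff (a x : ZMod 7) :
    x ∈ ({a, a + 1, a + 2, a + 3} : Set (ZMod 7)) ↔ (x - a).val ≤ 3 := by
  simp only [mem_insert_iff, mem_singleton_iff]
  revert a x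
  decide

theorem two_le_val_sub_iff_of_adj : ∀ {c x y : ZMod 7}, (x - c).val ≤ 3 → (y - c).val ≤ 3 →
    (circClique 7 2).Adj x y → (2 ≤ (x - c).val ↔ ¬2 ≤ (y - c).val) := by
  decide

theorem exists_adj_of_mem_interval :
    ∀ a x : ZMod 7, ∃ y, (y - a).val ≤ 3 ∧ (circClique 7 2).Adj y x := by
  decide

theorem exists_adj_interval_of_adj : ∀ {a b : ZMod 7}, (circClique 7 2).Adj a b →
    ∃ c, (c - a).val ≤ 3 ∧ ∀ y, (y - b).val ≤ 3 → (circClique 7 2).Adj c y := by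
  decide

theorem eq_add_one_or_sub_one_of_not_adj : ∀ {x y : ZMod 7}, ¬(circClique 7 2).Adj x y →
    x ≠ y → x = y + 1 ∨ x = y - 1 := by
  decide

theorem adj_add_three_of_not_adj : ∀ {x y : ZMod 7}, ¬(circClique 7 2).Adj x y →
    (circClique 7 2).Adj (x + 3) y ∧ (circClique 7 2).Adj x (y + 3) := by
  decide

theorem adj_add_three_add_one_of_not_adj : ∀ {x y : ZMod 7}, ¬(circClique 7 2).Adj x y →
    x ≠ y - 1 → (circClique 7 2).Adj (x + 3) (y + 1) := by
  decide

theorem adj_neg_neg_iff : ∀ {x y : ZMod 7},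
    (circClique 7 2).Adj (-x) (-y) ↔ (circClique 7 2).Adj x y := by
  decide

theorem adj_neg_sub_three_iff : ∀ {x y : ZMod 7},
    (circClique 7 2).Adj (-x - 3) (-y - 3) ↔ (circClique 7 2).Adj x y := by
  decide

theorem val_sub_neg_sub_three_le_iff : ∀ {x a : ZMod 7},
    (x - (-a - 3)).val ≤ 3 ↔ (-x - a).val ≤ 3 := by
  decide

section Colouring

variable {m : ℕ} {a : Fin (m + 1) → ZMod 7}

def IsListColouring (a f : Fin (m + 1) → ZMod 7) : Prop :=
  (∀ v, (f v - a v).val ≤ 3) ∧ ∀ v, (circClique 7 2).Adj (f (v + 1)) (f v)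

theorem not_isListColouring_const (hm : Even m) (c : ZMod 7) (f : Fin (m + 1) → ZMod 7) :
    ¬IsListColouring (fun _ => c) f := by
  rintro ⟨hmem, hadj⟩
  let high v := decide (2 ≤ (f v - c).val)
  have hflip : ∀ v, high (v + 1) = !high v := fun v => by
    simp only [high, two_le_val_sub_iff_of_adj (hmem _) (hmem v) (hadj v), decide_not]
  exact Bool.not_ne_self _ <| isFixedPt_of_even Bool.involutive_not hm
    (mapsTo_univ _ _) (fun v _ => hflip v) (mem_univ (high 0))

theorem IsListColouring.comp_add_right {f : Fin (m + 1) → ZMod 7} (j : Fin (m + 1))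
    (h : IsListColouring (fun v => a (v + j)) f) : IsListColouring a (fun v => f (v - j)) := by
  refine ⟨fun v => by simpa using h.1 (v - j), fun v => ?_⟩
  change (circClique 7 2).Adj (f (v + 1 - j)) (f (v - j))
  rw [← sub_add_eq_add_sub]
  exact h.2 (v - j)

theorem IsListColouring.neg {f : Fin (m + 1) → ZMod 7}
    (h : IsListColouring (fun v => -a v - 3) f) : IsListColouring a (fun v => -f v) :=
  ⟨fun v => val_sub_neg_sub_three_le_iff.mp (h.1 v), fun v => adj_neg_neg_iff.mpr (h.2 v)⟩

theorem exists_isListColouring_of_adj_last (h : (circClique 7 2).Adj (a 0) (a (Fin.last m))) :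
    ∃ f, IsListColouring a f := by
  obtain ⟨c, hc, hc_adj⟩ := exists_adj_interval_of_adj h
  choose next hnext_mem hnext_adj using exists_adj_of_mem_interval
  let f : Fin (m + 1) → ZMod 7 := Fin.induction c fun i x => next (a i.succ) x
  have hmem : ∀ v, (f v - a v).val ≤ 3 :=
    Fin.cases (by simpa [f] using hc) fun i => by simpa [f] using hnext_mem (a i.succ) _
  refine ⟨f, hmem, fun v => ?_⟩
  by_cases hv : v = Fin.last m
  · rw [hv, Fin.last_add_one]
    simpa [f] using hc_adj _ (hmem (Fin.last m))
  · obtain ⟨i, rfl⟩ := Fin.exists_castSucc_eq.mpr hv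
    rw [Fin.coeSucc_eq_succ]
    simpa [f] using hnext_adj (a i.succ) (f i.castSucc)

theorem exists_isListColouring_of_step_up_last (hm : Even m)
    (hnear : ∀ v, ¬(circClique 7 2).Adj (a (v + 1)) (a v))
    (hlast : a 0 = a (Fin.last m) + 1) (hfirst : a 1 ≠ a 0 - 1) :
    ∃ f, IsListColouring a f := by
  have hlast0 : Fin.last m ≠ 0 := fun h0 => by
    rw [h0] at hlast
    exact (by decide : ∀ x : ZMod 7, x ≠ x + 1) _ hlast
  refine ⟨fun v => a v + if v = 0 then 1 else if Even v.val then 0 else 3,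
    fun v => ?_, fun v => ?_⟩
  · rw [add_sub_cancel_left]
    split_ifs <;> decide
  by_cases hv : v = Fin.last m
  · subst hv
    simp only [Fin.last_add_one, if_neg hlast0, Fin.val_last, if_pos hm, hlast]
    exact (by decide : ∀ y : ZMod 7, (circClique 7 2).Adj (y + 1 + 1) (y + 0)) _
  have hval : (v + 1).val = v.val + 1 := Fin.val_add_one_of_lt (Fin.lt_last_iff_ne_last.mpr hv)
  have hv1 : v + 1 ≠ 0 := by
    rw [Ne, Fin.ext_iff, hval, Fin.val_zero]
    omega
  simp only [if_neg hv1, hval, Nat.even_add_one]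
  by_cases hv0 : v = 0
  · subst hv0
    simpa using adj_add_three_add_one_of_not_adj (by simpa using hnear 0) hfirst
  rw [if_neg hv0]
  split_ifs
  · simpa using (adj_add_three_of_not_adj (hnear v)).1
  · simpa using (adj_add_three_of_not_adj (hnear v)).2

theorem exists_isListColouring_of_adj (v : Fin (m + 1))
    (hv : (circClique 7 2).Adj (a (v + 1)) (a v)) : ∃ f, IsListColouring a f := by
  have hrot : Fin.last m + (v + 1) = v := by rw [add_left_comm, Fin.last_add_one, add_zero]
  obtain ⟨f, hf⟩ := exists_isListColouring_of_adj_last (a := fun w => a (w + (v + 1)))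
    (by simpa [hrot] using hv)
  exact ⟨_, hf.comp_add_right (v + 1)⟩

theorem exists_isListColouring_of_step_up (hm : Even m)
    (hnear : ∀ v, ¬(circClique 7 2).Adj (a (v + 1)) (a v)) (v : Fin (m + 1))
    (hv : a (v + 1) = a v + 1) (hv' : a (v + 1 + 1) ≠ a (v + 1) - 1) :
    ∃ f, IsListColouring a f := by
  have hrot : Fin.last m + (v + 1) = v := by rw [add_left_comm, Fin.last_add_one, add_zero]
  obtain ⟨f, hf⟩ := exists_isListColouring_of_step_up_last hm (a := fun w => a (w + (v + 1)))
    (fun w => by simpa [add_right_comm w 1] using hnear (w + (v + 1)))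
    (by simpa [hrot] using hv) (by simp only [zero_add]; rwa [add_comm 1])
  exact ⟨_, hf.comp_add_right (v + 1)⟩

theorem exists_isListColouring_of_step_down (hm : Even m)
    (hnear : ∀ v, ¬(circClique 7 2).Adj (a (v + 1)) (a v)) (v : Fin (m + 1))
    (hv : a (v + 1) = a v - 1) (hv' : a (v + 1 + 1) ≠ a (v + 1) + 1) :
    ∃ f, IsListColouring a f := by
  obtain ⟨f, hf⟩ := exists_isListColouring_of_step_up hm (a := fun w => -a w - 3)
    (fun w => adj_neg_sub_three_iff.not.mpr (hnear w)) v (by rw [hv]; ring)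
    (by contrapose! hv'; linear_combination -hv')
  exact ⟨_, hf.neg⟩

theorem exists_isListColouring (hm : Even m) (ha : ∃ u v, a u ≠ a v) :
    ∃ f, IsListColouring a f := by
  have hstep : ∃ v, a (v + 1) - a v ≠ 0 := by
    by_contra! h
    obtain ⟨u, v, huv⟩ := ha
    exact huv (apply_eq_apply_of_forall_apply_add_one (fun w => sub_eq_zero.mp (h w)) v u)
  by_cases hfar : ∃ v, (circClique 7 2).Adj (a (v + 1)) (a v)
  · obtain ⟨v, hv⟩ := hfar
    exact exists_isListColouring_of_adj v hv
  push Not at hfar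
  obtain ⟨v, hv, hv'⟩ := exists_ne_zero_and_ne_neg (by decide) hm hstep
  rcases eq_add_one_or_sub_one_of_not_adj (hfar v) (sub_ne_zero.mp hv) with h | h
  · exact exists_isListColouring_of_step_up hm hfar v h (by contrapose! hv'; rw [hv', h]; ring)
  · exact exists_isListColouring_of_step_down hm hfar v h (by contrapose! hv'; rw [hv', h]; ring)

end Colouring

end OddCycleListColouring

open OddCycleListColouring

/-- A 4-interval list assignment on an odd cycle `C_{2k+1}` admits a list
`(7,2)`-colouring iff it is not uniform. -/
theorem stmt_10 (k : ℕ) (hk : 1 ≤ k) (L : Fin (2 * k + 1) → Set (ZMod 7))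
    (hL : ∀ v, ∃ a : ZMod 7, L v = {a, a + 1, a + 2, a + 3}) :
    (∃ f : Fin (2 * k + 1) → ZMod 7, (∀ v, f v ∈ L v) ∧
      ∀ u v, (cycleGraph (2 * k + 1)).Adj u v → (circClique 7 2).Adj (f u) (f v)) ↔
    ¬ (∀ u v, L u = L v) := by
  choose a ha using hL
  have hcycle := forall_adj_iff_forall_adj_add_one (H := circClique 7 2) (m := 2 * k) (by omega)
  constructor
  · rintro ⟨f, hf, hadj⟩ huni
    refine not_isListColouring_const (even_two_mul k) (a 0) f ⟨fun v => ?_, (hcycle f).mp hadj⟩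
    rw [← mem_interval_iff, ← ha 0, huni 0 v]
    exact hf v
  · intro hne
    obtain ⟨f, hf, hadj⟩ := exists_isListColouring (even_two_mul k) (a := a) <| by
      contrapose! hne
      intro u v
      rw [ha u, ha v, hne u v]
    exact ⟨f, fun v => by rw [ha v, mem_interval_iff]; exact hf v, (hcycle f).mpr hadj⟩
end

section
/- Let G be a finite simple 4-critical graph with no (7,2)-colouring. If D_3(G) contains no cycle, then every connected component of D_3(G) either is isomorphic to a path (possibly a single vertex) or has at most four vertices. -/
/-!
Let `uv` be an edge and `φ` a 3-colouring of `G - uv`; by 4-criticality `φ u = φ v`. Call a walk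
rising if `φ` increases by one (mod 3) along each of its edges. If no rising walk of length 3 leads
from `u` to `v`, give each vertex the level 2, 1 or 0 according as it is reached from `u` by a
rising walk of length `< 3`, of length `3, 4, 5`, or not at all; then
`t ↦ 2 (φ t - φ u) + level t - 1` is a `(7,2)`-colouring of `G`. Hence, with no `(7,2)`-colouring, there are rising walks `u a b v` and
`v a' b' u` with `a ≠ b'`, and if `deg u = 3` every neighbour `w ≠ v` of `u` lies on a 4-cycle
`u w x v`.

In the forest `D₃(G)` such a 4-cycle cannot occur when `v` has three neighbours in `D₃(G)`, since
`x` is then one of them: so those neighbours are leaves and the component of `v` has at most four vertices. Every other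
component has maximum degree at most two, and a tree of maximum degree two is a path.
-/

open SimpleGraph

instance circClique.instDecidableRelAdj (p q : ℕ) : DecidableRel (circClique p q).Adj :=
  fun i j => by unfold circClique; infer_instance

/-- The vertices of colour `x` of a 3-colouring are spread over the three consecutive vertices
`2x - 1, 2x, 2x + 1` of `G_{7,2}`, according to a level `i`. -/
def circEmbed (x : ZMod 3) (i : Fin 3) : ZMod 7 := 2 * x.val + i.val - 1

lemma circClique_adj_circEmbed : ∀ (x : ZMod 3) (i j : Fin 3), (x ≠ 2 → i ≤ j) →
    i.val ≤ j.val + 1 → (circClique 7 2).Adj (circEmbed x i) (circEmbed (x + 1) j) := by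
  decide

namespace SimpleGraph

variable {V : Type*}

section Rising

def RisingReach (G : SimpleGraph V) (φ : V → ZMod 3) (u : V) : ℕ → V → Prop
  | 0, t => t = u
  | n + 1, t => ∃ a, G.RisingReach φ u n a ∧ G.Adj a t ∧ φ t = φ a + 1

open Classical in
noncomputable def risingLevel (G : SimpleGraph V) (φ : V → ZMod 3) (u t : V) : Fin 3 :=
  if G.RisingReach φ u (φ t - φ u).val t then 2
  else if G.RisingReach φ u ((φ t - φ u).val + 3) t then 1 else 0

variable {G : SimpleGraph V} {φ : V → ZMod 3} {u : V}

lemma risingLevel_le_of_adj {a b : V} (hab : G.Adj a b) (hba : φ b = φ a + 1)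
    (ha : φ a - φ u ≠ 2) : G.risingLevel φ u a ≤ G.risingLevel φ u b := by
  have hval : (φ b - φ u).val = (φ a - φ u).val + 1 := by
    rw [hba, add_sub_right_comm]
    generalize φ a - φ u = x at ha
    revert x; decide
  have reach : ∀ n, G.RisingReach φ u n a → G.RisingReach φ u (n + 1) b :=
    fun n h => ⟨a, h, hab, hba⟩
  unfold risingLevel
  split_ifs <;> simp_all

lemma risingLevel_le_succ_of_adj {a b : V} (hab : G.Adj a b) (hba : φ b = φ a + 1) :
    (G.risingLevel φ u a).val ≤ (G.risingLevel φ u b).val + 1 := by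
  by_cases ha : φ a - φ u = 2
  · have hb : (φ b - φ u).val = 0 := by rw [hba, add_sub_right_comm, ha]; rfl
    have wrap : G.RisingReach φ u (φ a - φ u).val a →
        G.RisingReach φ u ((φ b - φ u).val + 3) b := by
      rw [hb, ha]; exact fun h => ⟨a, h, hab, hba⟩
    unfold risingLevel
    split_ifs <;> simp_all
  · exact (Fin.le_iff_val_le_val.mp (risingLevel_le_of_adj hab hba ha)).trans (Nat.le_succ _)

lemma hasCircColoring_seven_two_of_not_risingReach_three {v : V}
    (hφ : ∀ a b, G.Adj a b → φ a = φ b → s(a, b) = s(u, v)) (huv : φ u = φ v)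
    (hv : ¬ G.RisingReach φ u 3 v) : HasCircColoring G 7 2 := by
  have level_u : G.risingLevel φ u u = 2 := by simp [risingLevel, RisingReach]
  have level_v (hne : u ≠ v) : G.risingLevel φ u v = 0 := by
    have hv0 : ¬ G.RisingReach φ u 0 v := Ne.symm hne
    rw [risingLevel, ← huv, sub_self, ZMod.val_zero, zero_add, if_neg hv0, if_neg hv]
  have adj_of_rise {a b : V} (hab : G.Adj a b) (hba : φ b = φ a + 1) :
      (circClique 7 2).Adj (circEmbed (φ a - φ u) (G.risingLevel φ u a))
        (circEmbed (φ b - φ u) (G.risingLevel φ u b)) := by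
    rw [hba, add_sub_right_comm]
    exact circClique_adj_circEmbed _ _ _ (risingLevel_le_of_adj hab hba)
      (risingLevel_le_succ_of_adj hab hba)
  refine ⟨⟨fun t => circEmbed (φ t - φ u) (G.risingLevel φ u t), fun {a b} hab => ?_⟩⟩
  by_cases hab' : φ a = φ b
  · rcases Sym2.eq_iff.mp (hφ a b hab hab') with ⟨rfl, rfl⟩ | ⟨rfl, rfl⟩
    · simp only [← huv, sub_self, level_u, level_v hab.ne]; decide
    · simp only [← huv, sub_self, level_u, level_v hab.ne']; decide
  · have : φ b = φ a + 1 ∨ φ a = φ b + 1 := by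
      revert hab'; generalize φ a = x; generalize φ b = y; revert x y; decide
    rcases this with h | h
    · exact adj_of_rise hab h
    · exact (adj_of_rise hab.symm h).symm

lemma exists_rising_walk_of_not_hasCircColoring (hno : ¬ HasCircColoring G 7 2) {v : V}
    (hφ : ∀ a b, G.Adj a b → φ a = φ b → s(a, b) = s(u, v)) (huv : φ u = φ v) :
    ∃ a b, G.Adj u a ∧ G.Adj a b ∧ G.Adj b v ∧ φ a = φ u + 1 ∧ φ b = φ u + 2 := by
  by_contra h
  refine hno (hasCircColoring_seven_two_of_not_risingReach_three hφ huv ?_)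
  rintro ⟨b, ⟨a, ⟨_, rfl, hua, ha⟩, hab, hb⟩, hbv, -⟩
  exact h ⟨a, b, hua, hab, hbv, ha, by rw [hb, ha]; ring⟩

end Rising

lemma FourCritical.exists_coloring_deleteEdge {G : SimpleGraph V} (hG : FourCritical G)
    {u v : V} (huv : G.Adj u v) :
    ∃ φ : V → ZMod 3, φ u = φ v ∧ ∀ a b, G.Adj a b → φ a = φ b → s(a, b) = s(u, v) := by
  obtain ⟨φ⟩ := hG.2 s(u, v) huv
  have hφ : ∀ a b, G.Adj a b → φ a = φ b → s(a, b) = s(u, v) := fun a b hab heq => by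
    by_contra hne
    exact φ.valid (by simp [hab, hne]) heq
  refine ⟨fun t => φ t, ?_, hφ⟩
  by_contra hne
  refine hG.1 ⟨Coloring.mk φ fun {a b} hab heq => hne ?_⟩
  rcases Sym2.eq_iff.mp (hφ a b hab heq) with ⟨rfl, rfl⟩ | ⟨rfl, rfl⟩
  · exact heq
  · exact heq.symm

lemma eq_or_eq_or_eq_of_degree_eq_three {G : SimpleGraph V} {t a b c d : V}
    [Fintype (G.neighborSet t)] (ht : G.degree t = 3) (ha : G.Adj t a) (hb : G.Adj t b)
    (hc : G.Adj t c) (hab : a ≠ b) (hac : a ≠ c) (hbc : b ≠ c) (hd : G.Adj t d) :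
    d = a ∨ d = b ∨ d = c := by
  classical
  have hN : G.neighborFinset t = {a, b, c} := by
    refine (Finset.eq_of_subset_of_card_le (fun x hx => ?_) ?_).symm
    · simp only [Finset.mem_insert, Finset.mem_singleton] at hx
      rcases hx with rfl | rfl | rfl <;> simpa
    · rw [card_neighborFinset_eq_degree, ht, Finset.card_insert_of_notMem (by simp [hab, hac]),
        Finset.card_pair hbc]
  simpa [hN] using (G.mem_neighborFinset t d).mpr hd

lemma FourCritical.exists_adj_adj_of_degree_eq_three {G : SimpleGraph V} (hG : FourCritical G)
    (hno : ¬ HasCircColoring G 7 2) {u v w : V} [Fintype (G.neighborSet u)]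
    (hu : G.degree u = 3) (huv : G.Adj u v) (huw : G.Adj u w) (hwv : w ≠ v) :
    ∃ x, G.Adj v x ∧ x ≠ u ∧ G.Adj w x := by
  obtain ⟨φ, hφuv, hφ⟩ := hG.exists_coloring_deleteEdge huv
  obtain ⟨a, b, hua, hab, hbv, ha, hb⟩ := exists_rising_walk_of_not_hasCircColoring hno hφ hφuv
  obtain ⟨a', b', hva', ha'b', hb'u, ha', hb'⟩ := exists_rising_walk_of_not_hasCircColoring hno
    (fun x y hxy h => (hφ x y hxy h).trans Sym2.eq_swap) hφuv.symm
  rw [← hφuv] at ha' hb'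
  have shift_ne : ∀ x : ZMod 3, x ≠ x + 1 ∧ x ≠ x + 2 ∧ x + 1 ≠ x + 2 := by decide
  have hav : a ≠ v := fun h => (shift_ne (φ u)).1 (by rw [← ha, h, hφuv])
  have hb'v : b' ≠ v := fun h => (shift_ne (φ u)).2.1 (by rw [← hb', h, hφuv])
  have hab' : a ≠ b' := fun h => (shift_ne (φ u)).2.2 (by rw [← ha, ← hb', h])
  have hbu : b ≠ u := fun h => (shift_ne (φ u)).2.1 (by rw [← hb, h])
  have ha'u : a' ≠ u := fun h => (shift_ne (φ u)).1 (by rw [← ha', h])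
  rcases eq_or_eq_or_eq_of_degree_eq_three hu huv hua hb'u.symm hav.symm hb'v.symm hab' huw with
    h | rfl | rfl
  · exact absurd h hwv
  · exact ⟨b, hbv.symm, hbu, hab⟩
  · exact ⟨a', hva', ha'u, ha'b'.symm⟩

section Paths

variable {H : SimpleGraph V}

lemma IsAcyclic.eq_add_one_of_adj_getVert (hH : H.IsAcyclic) {u v : V} {p : H.Walk u v}
    (hp : p.IsPath) {i j : ℕ} (hij : i < j) (hj : j ≤ p.length)
    (h : H.Adj (p.getVert i) (p.getVert j)) : j = i + 1 := by
  have hmem : p.getVert j ∈ (p.drop i).support := by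
    simpa [Walk.drop_getVert, Nat.add_sub_cancel' hij.le] using
      (p.drop i).getVert_mem_support (j - i)
  have := hH.eq_snd_of_adj_start (hp.drop i) h hmem
  rw [Walk.snd, Walk.drop_getVert] at this
  exact hp.getVert_injOn (by simpa using hj) (by simp; omega) this

lemma IsAcyclic.nonempty_induce_support_iso_pathGraph (hH : H.IsAcyclic) {u v : V}
    {p : H.Walk u v} (hp : p.IsPath) :
    Nonempty (H.induce {x | x ∈ p.support} ≃g pathGraph (p.length + 1)) := by
  let f : Fin (p.length + 1) → {x | x ∈ p.support} :=
    fun i => ⟨p.getVert i, p.getVert_mem_support i⟩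
  have hf : Function.Bijective f := by
    refine ⟨fun i j hij => Fin.ext ?_, fun x => ?_⟩
    · exact hp.getVert_injOn (by simpa using Nat.lt_succ_iff.mp i.2)
        (by simpa using Nat.lt_succ_iff.mp j.2) (congrArg Subtype.val hij)
    · obtain ⟨i, hi, hle⟩ := Walk.mem_support_iff_exists_getVert.mp x.2
      exact ⟨⟨i, Nat.lt_succ_of_le hle⟩, Subtype.ext hi⟩
  refine ⟨(RelIso.mk (Equiv.ofBijective f hf) fun {i j} => ?_).symm⟩
  show H.Adj (p.getVert i) (p.getVert j) ↔ (pathGraph (p.length + 1)).Adj i j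
  rw [pathGraph_adj]
  constructor
  · intro h
    rcases lt_trichotomy i.val j.val with hij | hij | hij
    · exact Or.inl (hH.eq_add_one_of_adj_getVert hp hij (Nat.lt_succ_iff.mp j.2) h).symm
    · exact absurd (congrArg p.getVert hij) h.ne
    · exact Or.inr (hH.eq_add_one_of_adj_getVert hp hij (Nat.lt_succ_iff.mp i.2) h.symm).symm
  · rintro (h | h)
    · simpa [← h] using p.adj_getVert_succ (by omega : i.val < p.length)
    · simpa [← h] using (p.adj_getVert_succ (by omega : j.val < p.length)).symm

lemma exists_isPath_forall_length_le [Fintype V] {S : Set V} (hS : S.Nonempty) :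
    ∃ (a b : V) (p : H.Walk a b), p.IsPath ∧ a ∈ S ∧
      ∀ (a' b' : V) (q : H.Walk a' b'), q.IsPath → a' ∈ S → q.length ≤ p.length := by
  set L : Set ℕ := {n | ∃ (a b : V) (p : H.Walk a b), p.IsPath ∧ a ∈ S ∧ p.length = n}
  have hL : L.Nonempty := ⟨0, hS.some, hS.some, .nil, .nil, hS.some_mem, rfl⟩
  have hbdd : BddAbove L := ⟨Fintype.card V, by
    rintro _ ⟨a, b, p, hp, -, rfl⟩
    exact hp.length_lt.le⟩
  obtain ⟨a, b, p, hp, ha, hlen⟩ := Nat.sSup_mem hL hbdd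
  exact ⟨a, b, p, hp, ha, fun a' b' q hq ha' => hlen ▸ le_csSup hbdd ⟨a', b', q, hq, ha', rfl⟩⟩

lemma ConnectedComponent.exists_isPath_supp_eq [Fintype V] (c : H.ConnectedComponent)
    (hdeg : ∀ t ∈ c.supp, ∀ a b z, H.Adj t a → H.Adj t b → H.Adj t z → a = b ∨ a = z ∨ b = z) :
    ∃ (u v : V) (p : H.Walk u v), p.IsPath ∧ c.supp = {x | x ∈ p.support} := by
  classical
  obtain ⟨a, b, p, hp, ha, hmax⟩ := exists_isPath_forall_length_le (H := H) c.nonempty_supp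
  have hsupp : ∀ x ∈ p.support, x ∈ c.supp := fun x hx =>
    (ConnectedComponent.sound (p.takeUntil x hx).reachable).symm.trans ha
  refine ⟨a, b, p, hp, Set.Subset.antisymm (fun x hx => ?_) hsupp⟩
  by_contra hxp
  obtain ⟨q⟩ : H.Reachable a x := ConnectedComponent.exact (ha.trans hx.symm)
  obtain ⟨⟨⟨y, z⟩, hyz⟩, -, hy, hz⟩ := q.exists_boundary_dart _ p.start_mem_support hxp
  have hzc : z ∈ c.supp :=
    (ConnectedComponent.connectedComponentMk_eq_of_adj hyz).symm.trans (hsupp y hy)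
  obtain ⟨i, rfl, hil⟩ := Walk.mem_support_iff_exists_getVert.mp hy
  rcases Nat.eq_zero_or_pos i with rfl | hi0
  · have hza : H.Adj z a := by simpa using hyz.symm
    simpa using hmax z b (.cons hza p) (hp.cons hz) hzc
  rcases hil.eq_or_lt with rfl | hil
  · have hzb : H.Adj z b := by simpa using hyz.symm
    simpa using hmax z a (.cons hzb p.reverse) (hp.reverse.cons (by simpa using hz)) hzc
  have hprev : H.Adj (p.getVert i) (p.getVert (i - 1)) := by
    simpa [Nat.sub_add_cancel hi0] using (p.adj_getVert_succ (i := i - 1) (by omega)).symm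
  rcases hdeg _ (hsupp _ hy) _ _ _ hprev (p.adj_getVert_succ hil) hyz with h | h | h
  · have := hp.getVert_injOn (by simp; omega) (by simp; omega) h
    omega
  · exact hz (h ▸ p.getVert_mem_support _)
  · exact hz (h ▸ p.getVert_mem_support _)

lemma IsAcyclic.exists_induce_supp_iso_pathGraph [Fintype V] (hH : H.IsAcyclic)
    (c : H.ConnectedComponent)
    (hdeg : ∀ t ∈ c.supp, ∀ a b z, H.Adj t a → H.Adj t b → H.Adj t z → a = b ∨ a = z ∨ b = z) :
    ∃ n, Nonempty (H.induce c.supp ≃g pathGraph n) := by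
  obtain ⟨u, v, p, hp, hc⟩ := c.exists_isPath_supp_eq hdeg
  rw [hc]
  exact ⟨_, hH.nonempty_induce_support_iso_pathGraph hp⟩

lemma ConnectedComponent.supp_subset_of_forall_adj {c : H.ConnectedComponent} {T : Set V}
    (hT : ∀ x y, x ∈ T → H.Adj x y → y ∈ T) {t : V} (ht : t ∈ T) (htc : t ∈ c.supp) :
    c.supp ⊆ T := by
  intro x hx
  by_contra hxT
  obtain ⟨q⟩ : H.Reachable t x := ConnectedComponent.exact (htc.trans hx.symm)
  obtain ⟨d, -, hd, hd'⟩ := q.exists_boundary_dart T ht hxT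
  exact hd' (hT _ _ hd d.adj)

end Paths

lemma FourCritical.eq_of_adj_of_three_adj [Fintype V] {G : SimpleGraph V} [DecidableRel G.Adj]
    (hG : FourCritical G) (hno : ¬ HasCircColoring G 7 2)
    (hacyc : (G.induce {v | G.degree v = 3}).IsAcyclic) {v u x y w : {v | G.degree v = 3}}
    (hvu : (G.induce {v | G.degree v = 3}).Adj v u) (hvx : (G.induce {v | G.degree v = 3}).Adj v x)
    (hvy : (G.induce {v | G.degree v = 3}).Adj v y) (hux : u ≠ x) (huy : u ≠ y) (hxy : x ≠ y)
    (huw : (G.induce {v | G.degree v = 3}).Adj u w) : w = v := by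
  set H := G.induce {v | G.degree v = 3}
  by_contra hwv
  obtain ⟨z, hvz, hzu, hwz⟩ := hG.exists_adj_adj_of_degree_eq_three hno u.2
    (show G.Adj u v from hvu.symm) huw (Subtype.coe_injective.ne hwv)
  obtain ⟨z', hvz', hz'u, rfl⟩ : ∃ z' : {v | G.degree v = 3}, H.Adj v z' ∧ z' ≠ u ∧ z'.1 = z := by
    rcases eq_or_eq_or_eq_of_degree_eq_three v.2 hvu hvx hvy (Subtype.coe_injective.ne hux)
      (Subtype.coe_injective.ne huy) (Subtype.coe_injective.ne hxy) hvz with rfl | rfl | rfl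
    · exact absurd rfl hzu
    · exact ⟨x, hvx, hux.symm, rfl⟩
    · exact ⟨y, hvy, huy.symm, rfl⟩
  have hwz' : H.Adj w z' := hwz
  let p : H.Walk w z' := .cons huw.symm (.cons hvu.symm (.cons hvz' .nil))
  have hp : p.IsPath := by
    simp [p, Walk.cons_isPath_iff, huw.ne', hwv, hvu.ne', hvz'.ne, hz'u.symm, hwz'.ne]
  exact hz'u (hacyc.eq_snd_of_adj_start hp hwz' (by simp [p]))

end SimpleGraph

/-- If the subgraph induced on degree-3 vertices of a 4-critical graph with no
(7,2)-colouring is acyclic, then each of its components is a path or has at most four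
vertices. -/
theorem stmt_13 {V : Type*} [Fintype V] (G : SimpleGraph V) [DecidableRel G.Adj]
    (hcrit : FourCritical G) (hno : ¬ HasCircColoring G 7 2)
    (hacyc : (G.induce {v | G.degree v = 3}).IsAcyclic) :
    ∀ c : (G.induce {v | G.degree v = 3}).ConnectedComponent,
      (∃ n : ℕ, Nonempty
        (((G.induce {v | G.degree v = 3}).induce c.supp) ≃g pathGraph n)) ∨
      c.supp.ncard ≤ 4 := by
  intro c
  refine or_iff_not_imp_right.mpr fun hc => hacyc.exists_induce_supp_iso_pathGraph c ?_
  intro t ht a b z hta htb htz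
  by_contra! hne
  obtain ⟨hab, haz, hbz⟩ := hne
  have hT : ∀ x y, x ∈ ({t, a, b, z} : Set _) → (G.induce {v | G.degree v = 3}).Adj x y →
      y ∈ ({t, a, b, z} : Set _) := by
    rintro x y (rfl | rfl | rfl | rfl) hxy
    · rcases eq_or_eq_or_eq_of_degree_eq_three x.2 hta htb htz (Subtype.coe_injective.ne hab)
        (Subtype.coe_injective.ne haz) (Subtype.coe_injective.ne hbz) hxy with h | h | h <;>
        simp [Subtype.coe_injective h]
    · simp [hcrit.eq_of_adj_of_three_adj hno hacyc hta htb htz hab haz hbz hxy]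
    · simp [hcrit.eq_of_adj_of_three_adj hno hacyc htb hta htz hab.symm hbz haz hxy]
    · simp [hcrit.eq_of_adj_of_three_adj hno hacyc htz hta htb haz.symm hbz.symm hab hxy]
  apply hc
  calc c.supp.ncard ≤ ({t, a, b, z} : Set _).ncard :=
        Set.ncard_le_ncard (ConnectedComponent.supp_subset_of_forall_adj hT (by simp) ht)
    _ ≤ 4 := by grind [Set.ncard_insert_le, Set.ncard_singleton]
end
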